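/- Two-point sets in the Heisenberg group can have positive beta number: for a = 0 and b = (0,0,1), every horizontal line L satisfies max{d(a,L), d(b,L)} ≥ 1/16. Hence inf over horizontal lines L of max{d(a,L),d(b,L)} is at least 1/16 > 0. -/

import Mathlib

/-- The Heisenberg group as `ℝ × ℝ × ℝ`. -/
abbrev H : Type := ℝ × ℝ × ℝ

/-- Heisenberg group multiplication. -/
def Hmul (a b : H) : H :=
  (a.1 + b.1, a.2.1 + b.2.1, a.2.2 + b.2.2 + 2 * (a.1 * b.2.1 - b.1 * a.2.1))

/-- Heisenberg group inverse. -/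
def Hinv (a : H) : H := (-a.1, -a.2.1, -a.2.2)

/-- The Koranyi norm. -/
noncomputable def KN (a : H) : ℝ :=
  ((a.1 ^ 2 + a.2.1 ^ 2) ^ 2 + a.2.2 ^ 2) ^ ((1 : ℝ) / 4)

/-- The Koranyi distance. -/
noncomputable def Hd (a b : H) : ℝ := KN (Hmul (Hinv a) b)

/-- Distance from a point to a set. -/
noncomputable def distSet (p : H) (L : Set H) : ℝ := sInf {r : ℝ | ∃ q ∈ L, r = Hd p q}

/-- The x-axis, a horizontal line. -/
def xAxis : Set H := {q : H | ∃ t : ℝ, q = (t, 0, 0)}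

/-- A general horizontal line through `g` with horizontal direction `v`. -/
def horizLine (g : H) (v : ℝ × ℝ) : Set H :=
  {q : H | ∃ t : ℝ, q = Hmul g (t * v.1, t * v.2, 0)}

/-- The non-horizontality `NH(g) = N(g⁻¹ · π̃(g))`. -/
noncomputable def NH (g : H) : ℝ := KN (Hmul (Hinv g) (g.1, g.2.1, 0))

/-!
Two points `p`, `q` of one horizontal line differ by a horizontal element, `p⁻¹q = (w, 0)`,
which says that their heights differ by twice the symplectic form of their horizontal parts:
`z_q - z_p = 2 (x_p y_q - x_q y_p)`. A point within Korányi distance `r` of `0` has horizontal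
part of length at most `r` and height at most `r²`; a point within `s` of `(0,0,1)` has horizontal
part of length at most `s` and height within `s²` of `1`. Hence
`1 ≤ |z_q - z_p| + r² + s² ≤ 2 r s + r² + s² ≤ 2 (r² + s²)`, so one of the two distances to a
horizontal line is at least `1/2`, in particular at least `1/16`.
-/

lemma KN_nonneg (a : H) : 0 ≤ KN a := by
  unfold KN
  positivity

lemma KN_pow_four (a : H) : KN a ^ 4 = (a.1 ^ 2 + a.2.1 ^ 2) ^ 2 + a.2.2 ^ 2 := by
  unfold KN
  rw [← Real.rpow_natCast, ← Real.rpow_mul (by positivity)]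
  norm_num

lemma abs_vertical_le_KN_sq (a : H) : |a.2.2| ≤ KN a ^ 2 :=
  abs_le_of_sq_le_sq (by nlinarith [KN_pow_four a, sq_nonneg (a.1 ^ 2 + a.2.1 ^ 2)]) (by positivity)

lemma horizontal_sq_le_KN_sq (a : H) : a.1 ^ 2 + a.2.1 ^ 2 ≤ KN a ^ 2 :=
  (le_abs_self _).trans <|
    abs_le_of_sq_le_sq (by nlinarith [KN_pow_four a, sq_nonneg a.2.2]) (by positivity)

lemma horizLine_nonempty (g : H) (v : ℝ × ℝ) : (horizLine g v).Nonempty :=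
  ⟨_, 0, rfl⟩

lemma exists_mem_Hd_lt_of_distSet_lt {p : H} {L : Set H} {c : ℝ} (hL : L.Nonempty)
    (h : distSet p L < c) : ∃ q ∈ L, Hd p q < c := by
  obtain ⟨q, hq⟩ := hL
  obtain ⟨_, ⟨q', hq', rfl⟩, hlt⟩ :=
    exists_lt_of_csInf_lt (s := {r | ∃ q ∈ L, r = Hd p q}) ⟨Hd p q, q, hq, rfl⟩ h
  exact ⟨q', hq', hlt⟩

lemma vertical_Hmul_Hinv_eq_zero_of_mem_horizLine {g p q : H} {v : ℝ × ℝ}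
    (hp : p ∈ horizLine g v) (hq : q ∈ horizLine g v) : (Hmul (Hinv p) q).2.2 = 0 := by
  obtain ⟨s, rfl⟩ := hp
  obtain ⟨t, rfl⟩ := hq
  simp only [Hmul, Hinv]
  ring

lemma one_le_two_mul_Hd_sq_add_Hd_sq {g p q : H} {v : ℝ × ℝ}
    (hp : p ∈ horizLine g v) (hq : q ∈ horizLine g v) :
    1 ≤ 2 * (Hd (0, 0, 0) p ^ 2 + Hd (0, 0, 1) q ^ 2) := by
  have hgap : q.2.2 - p.2.2 = 2 * (p.1 * q.2.1 - q.1 * p.2.1) := by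
    have := vertical_Hmul_Hinv_eq_zero_of_mem_horizLine hp hq
    simp only [Hmul, Hinv] at this
    linarith
  have hdp : Hd (0, 0, 0) p = KN p := by
    simp [Hd, Hmul, Hinv]
  have hdq : Hd (0, 0, 1) q = KN (q.1, q.2.1, q.2.2 - 1) := by
    simp only [Hd, Hmul, Hinv]
    congr 1
    ext <;> simp only <;> ring
  have hp_horiz := horizontal_sq_le_KN_sq p
  have hq_horiz := horizontal_sq_le_KN_sq (q.1, q.2.1, q.2.2 - 1)
  have hp_vert := abs_le.mp (abs_vertical_le_KN_sq p)
  have hq_vert := abs_le.mp (abs_vertical_le_KN_sq (q.1, q.2.1, q.2.2 - 1))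
  dsimp only at hq_horiz hq_vert
  rw [hdp, hdq]
  nlinarith [sq_nonneg (p.1 - q.2.1), sq_nonneg (p.2.1 + q.1)]

theorem two_point_positive_beta_general (g : H) (v : ℝ × ℝ) :
    max (distSet ((0 : ℝ), (0 : ℝ), (0 : ℝ)) (horizLine g v))
        (distSet ((0 : ℝ), (0 : ℝ), (1 : ℝ)) (horizLine g v)) ≥ 1 / 16 := by
  by_contra! hlt
  obtain ⟨p, hp, hp_lt⟩ := exists_mem_Hd_lt_of_distSet_lt (horizLine_nonempty g v)
    ((le_max_left _ _).trans_lt hlt)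
  obtain ⟨q, hq, hq_lt⟩ := exists_mem_Hd_lt_of_distSet_lt (horizLine_nonempty g v)
    ((le_max_right _ _).trans_lt hlt)
  have hp_sq : Hd (0, 0, 0) p ^ 2 < (1 / 16) ^ 2 := pow_lt_pow_left₀ hp_lt (KN_nonneg _) two_ne_zero
  have hq_sq : Hd (0, 0, 1) q ^ 2 < (1 / 16) ^ 2 := pow_lt_pow_left₀ hq_lt (KN_nonneg _) two_ne_zero
  linarith [one_le_two_mul_Hd_sq_add_Hd_sq hp hq]

/-- The two-point set consisting of the origin and (0,0,1) has a positive beta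
number: every horizontal line L satisfies max of distances at least 1/16. -/
theorem two_point_positive_beta (g : H) (v : ℝ × ℝ) (hv : v ≠ 0) :
    max (distSet ((0 : ℝ), (0 : ℝ), (0 : ℝ)) (horizLine g v))
        (distSet ((0 : ℝ), (0 : ℝ), (1 : ℝ)) (horizLine g v)) ≥ 1 / 16 :=
  two_point_positive_beta_general g v
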